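/- arXiv:1605.01118 — 2 statements merged into one kernel-verified Lean document; each statement's English description precedes it below -/
import Mathlib

section
/- Let A be an n×n real symmetric matrix with all diagonal entries nonzero, let G = G(A) be its sparsity graph, let T_1,…,T_s be symmetric sets of pairs of distinct indices, let H = 𝒫(G), and assume that for every i no pair of T_i is an edge of H. Fix a vertex v and let H_v be the subgraph of H induced on the closed neighborhood N[v,H], with the thresholding sets T_i restricted to pairs contained in N[v,H]. Then a vertex w ≠ v is adjacent to v in 𝒫(G) if and only if w ∈ N[v,H] and the copies of v and w are adjacent in 𝒫(H_v); that is, N(v,𝒫(G)) = N(v,𝒫(H_v)). -/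
attribute [local instance] Classical.propDecidable

variable {V : Type*}

/-- The sparsity graph of a matrix: distinct `i, j` are adjacent iff the entry is nonzero. -/
def sparsityGraph (A : Matrix V V ℝ) : SimpleGraph V :=
  SimpleGraph.fromRel (fun i j => A i j ≠ 0)

/-- The square of a graph, where every vertex implicitly carries a loop. -/
def sqGraph (G : SimpleGraph V) : SimpleGraph V where
  Adj v w := v ≠ w ∧ ∃ u, (u = v ∨ G.Adj u v) ∧ (u = w ∨ G.Adj u w)
  symm := ⟨fun v w ⟨hne, u, h1, h2⟩ => ⟨hne.symm, u, h2, h1⟩⟩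
  loopless := ⟨fun v h => h.1 rfl⟩

/-- Deleting the edges given by a (symmetric) set of pairs from a graph. -/
def delT (G : SimpleGraph V) (T : Set (V × V)) : SimpleGraph V where
  Adj v w := G.Adj v w ∧ (v, w) ∉ T ∧ (w, v) ∉ T
  symm := ⟨fun v w ⟨h, h1, h2⟩ => ⟨h.symm, h2, h1⟩⟩
  loopless := ⟨fun v h => G.loopless.irrefl v h.1⟩

/-- The worst-case structure operator `𝒫(G) = sq (del_{T₁} (sq (del_{T₂} (… sq (del_{T_s} G)))))`,
applying `T_s` first. -/
def PGraph : List (Set (V × V)) → SimpleGraph V → SimpleGraph V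
  | [], G => G
  | T :: rest, G => sqGraph (delT (PGraph rest G) T)

/-- Thresholding operation on matrices: entries at positions in `T` are replaced by `0`. -/
noncomputable def threshMat (T : Set (V × V)) (X : Matrix V V ℝ) : Matrix V V ℝ :=
  fun i j => if (i, j) ∈ T then 0 else X i j

/-- The quadratic matrix polynomial `a·X² + b·X + c·I`. -/
noncomputable def quadPoly [Fintype V] [DecidableEq V] (a b c : ℝ) (X : Matrix V V ℝ) :
    Matrix V V ℝ :=
  a • (X * X) + b • X + c • (1 : Matrix V V ℝ)

/-- The thresholded matrix polynomial `P(A) = P₁(T₁(⋯ P_s(T_s(A)) ⋯))`, where each step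
is given by coefficients `(a, b, c)` and a thresholding set `T`; `T_s` is applied first. -/
noncomputable def PMat [Fintype V] [DecidableEq V] :
    List (ℝ × ℝ × ℝ × Set (V × V)) → Matrix V V ℝ → Matrix V V ℝ
  | [], A => A
  | (a, b, c, T) :: rest, A => quadPoly a b c (threshMat T (PMat rest A))

/-- The closed neighborhood `N[v,H]` of a vertex. -/
def closedNbhd (H : SimpleGraph V) (v : V) : Set V := {w | w = v ∨ H.Adj v w}

/-- The closed neighborhood `N[S,H]` of a set of vertices. -/
def closedNbhdSet (H : SimpleGraph V) (S : Set V) : Set V := ⋃ v ∈ S, closedNbhd H v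

/-- Restriction of a set of pairs of vertices to those pairs contained in `S`. -/
def restrictPairs (T : Set (V × V)) (S : Set V) : Set (↥S × ↥S) :=
  {p | ((p.1 : V), (p.2 : V)) ∈ T}

/-- The principal submatrix of `A` on the index set `S`. -/
def submatrixOn (A : Matrix V V ℝ) (S : Set V) : Matrix ↥S ↥S ℝ :=
  fun i j => A (i : V) (j : V)

/-- A symmetric set of pairs of distinct vertices. -/
def SymmPairs (T : Set (V × V)) : Prop :=
  (∀ p ∈ T, p.1 ≠ p.2) ∧ ∀ p ∈ T, (p.2, p.1) ∈ T

/- The backward direction is immediate, since a vertex `w ≠ v` of `N[v,H]` is an `H`-neighbour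
of `v` and `H = 𝒫(G)`. For the forward direction, every step `sq ∘ del_T` of `𝒫` keeps the edges
of a graph none of whose edges lies in `T`; as no `T_i` meets `H`, and hence none meets `H_v`,
`H_v ≤ 𝒫(H_v)`, so the `H`-edge `vw` survives in `𝒫(H_v)`. -/

lemma le_sqGraph (G : SimpleGraph V) : G ≤ sqGraph G :=
  fun a _ hab => ⟨hab.ne, a, Or.inl rfl, Or.inr hab⟩

lemma le_delT {G₀ K : SimpleGraph V} {T : Set (V × V)} (hK : G₀ ≤ K)
    (hT : ∀ p ∈ T, ¬ G₀.Adj p.1 p.2) : G₀ ≤ delT K T :=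
  fun _ _ hab => ⟨hK hab, fun hc => hT _ hc hab, fun hc => hT _ hc hab.symm⟩

lemma le_PGraph {G₀ K : SimpleGraph V} (hK : G₀ ≤ K) :
    ∀ {Ts : List (Set (V × V))}, (∀ T ∈ Ts, ∀ p ∈ T, ¬ G₀.Adj p.1 p.2) → G₀ ≤ PGraph Ts K
  | [], _ => hK
  | T :: rest, hTs =>
      have hrest : G₀ ≤ PGraph rest K :=
        le_PGraph hK fun T' hT' => hTs T' (List.mem_cons_of_mem _ hT')
      (le_delT hrest (hTs T List.mem_cons_self)).trans (le_sqGraph _)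

lemma mem_closedNbhd_iff_adj {H : SimpleGraph V} {v w : V} (hwv : w ≠ v) :
    w ∈ closedNbhd H v ↔ H.Adj v w :=
  or_iff_right hwv

theorem stmt1_general {n : ℕ} (A : Matrix (Fin n) (Fin n) ℝ)
    (Ts : List (Set (Fin n × Fin n)))
    (H : SimpleGraph (Fin n))
    (hH : H = PGraph Ts (sparsityGraph A))
    (hTH : ∀ T ∈ Ts, ∀ p ∈ T, ¬ H.Adj p.1 p.2)
    (v : Fin n) :
    ∀ w : Fin n, w ≠ v →
      ((PGraph Ts (sparsityGraph A)).Adj v w ↔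
        ∃ (hv : v ∈ closedNbhd H v) (hw : w ∈ closedNbhd H v),
          (PGraph (Ts.map fun T => restrictPairs T (closedNbhd H v))
            (SimpleGraph.induce (closedNbhd H v) H)).Adj ⟨v, hv⟩ ⟨w, hw⟩) := by
  intro w hwv
  rw [← hH]
  constructor
  · intro hvw
    have hHv_le : SimpleGraph.induce (closedNbhd H v) H ≤
        PGraph (Ts.map fun T => restrictPairs T (closedNbhd H v))
          (SimpleGraph.induce (closedNbhd H v) H) := by
      refine le_PGraph le_rfl fun T' hT' p hp hadj => ?_
      obtain ⟨T, hT, rfl⟩ := List.mem_map.mp hT'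
      exact hTH T hT _ hp hadj
    exact ⟨Or.inl rfl, Or.inr hvw, hHv_le hvw⟩
  · rintro ⟨-, hw, -⟩
    exact (mem_closedNbhd_iff_adj hwv).mp hw

/-- a vertex `w ≠ v` is adjacent to `v` in `𝒫(G)` iff `w ∈ N[v,H]` and the
copies of `v` and `w` are adjacent in `𝒫(H_v)`, where `H_v` is induced on `N[v,H]`. -/
theorem stmt1 {n : ℕ} (A : Matrix (Fin n) (Fin n) ℝ) (hA : A.IsSymm)
    (hdiag : ∀ i, A i i ≠ 0)
    (Ts : List (Set (Fin n × Fin n)))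
    (hsym : ∀ T ∈ Ts, SymmPairs T)
    (H : SimpleGraph (Fin n))
    (hH : H = PGraph Ts (sparsityGraph A))
    (hTH : ∀ T ∈ Ts, ∀ p ∈ T, ¬ H.Adj p.1 p.2)
    (v : Fin n) :
    ∀ w : Fin n, w ≠ v →
      ((PGraph Ts (sparsityGraph A)).Adj v w ↔
        ∃ (hv : v ∈ closedNbhd H v) (hw : w ∈ closedNbhd H v),
          (PGraph (Ts.map fun T => restrictPairs T (closedNbhd H v))
            (SimpleGraph.induce (closedNbhd H v) H)).Adj ⟨v, hv⟩ ⟨w, hw⟩) :=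
  stmt1_general A Ts H hH hTH v
end

section
/- Let A be an n×n real symmetric matrix, let T_1,…,T_s be symmetric sets of pairs of distinct indices, and let P be the associated thresholded matrix polynomial with arbitrary real coefficients a_i, b_i, c_i. Then the sparsity graph of P(A) is a subgraph of 𝒫(G(A)): for all distinct v, w, if P(A) v w ≠ 0 then v and w are adjacent in 𝒫(G(A)). -/
attribute [local instance] Classical.propDecidable

variable {V : Type*}

/-!
Off the diagonal, `a X² + b X + c I` has a nonzero `(v, w)` entry only if `X v w ≠ 0` or
`X v u * X u w ≠ 0` for some `u`, i.e. only along edges of `sq (G(X))`; and thresholding by a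
symmetric `T` removes the edges of `T` from the sparsity graph. Induction over the steps.
-/

section SparsityGraph

variable {X : Matrix V V ℝ} {H : SimpleGraph V}

lemma eq_or_adj_of_apply_ne_zero (hX : sparsityGraph X ≤ H) {i j : V} (h : X i j ≠ 0) :
    i = j ∨ H.Adj i j := by
  by_cases hij : i = j
  · exact Or.inl hij
  · exact Or.inr (hX ⟨hij, Or.inl h⟩)

lemma threshMat_apply_ne_zero {T : Set (V × V)} {i j : V} (h : threshMat T X i j ≠ 0) :
    (i, j) ∉ T ∧ X i j ≠ 0 := by
  by_cases hT : (i, j) ∈ T <;> simp_all [threshMat]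

lemma sparsityGraph_threshMat_le {T : Set (V × V)} (hT : SymmPairs T)
    (hX : sparsityGraph X ≤ H) : sparsityGraph (threshMat T X) ≤ delT H T := by
  have adj_of_ne_zero {v w : V} (hvw : v ≠ w) (h : threshMat T X v w ≠ 0) :
      (delT H T).Adj v w := by
    obtain ⟨hvwT, hXvw⟩ := threshMat_apply_ne_zero h
    exact ⟨hX ⟨hvw, Or.inl hXvw⟩, hvwT, fun hwvT => hvwT (hT.2 _ hwvT)⟩
  rintro v w ⟨hvw, hvw' | hwv⟩
  · exact adj_of_ne_zero hvw hvw'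
  · exact (adj_of_ne_zero hvw.symm hwv).symm

lemma Matrix.exists_ne_zero_of_mul_apply_ne_zero [Fintype V] {Y : Matrix V V ℝ} {v w : V}
    (h : (X * Y) v w ≠ 0) : ∃ u, X v u ≠ 0 ∧ Y u w ≠ 0 := by
  obtain ⟨u, -, hu⟩ := Finset.exists_ne_zero_of_sum_ne_zero h
  exact ⟨u, mul_ne_zero_iff.mp hu⟩

lemma quadPoly_apply_of_ne [Fintype V] [DecidableEq V] (a b c : ℝ) {v w : V} (hvw : v ≠ w) :
    quadPoly a b c X v w = a * (X * X) v w + b * X v w := by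
  simp [quadPoly, Matrix.one_apply_ne hvw]

lemma sparsityGraph_quadPoly_le [Fintype V] [DecidableEq V] (a b c : ℝ)
    (hX : sparsityGraph X ≤ H) : sparsityGraph (quadPoly a b c X) ≤ sqGraph H := by
  have adj_of_ne_zero {v w : V} (hvw : v ≠ w) (h : quadPoly a b c X v w ≠ 0) :
      (sqGraph H).Adj v w := by
    rw [quadPoly_apply_of_ne a b c hvw] at h
    by_cases hXvw : X v w = 0
    · have hsq : (X * X) v w ≠ 0 := by
        intro hsq
        simp [hsq, hXvw] at h
      obtain ⟨u, hvu, huw⟩ := Matrix.exists_ne_zero_of_mul_apply_ne_zero hsq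
      refine ⟨hvw, u, ?_, eq_or_adj_of_apply_ne_zero hX huw⟩
      rw [eq_comm, H.adj_comm]
      exact eq_or_adj_of_apply_ne_zero hX hvu
    · exact ⟨hvw, v, Or.inl rfl, Or.inr (hX ⟨hvw, Or.inl hXvw⟩)⟩
  rintro v w ⟨hvw, hvw' | hwv⟩
  · exact adj_of_ne_zero hvw hvw'
  · exact (adj_of_ne_zero hvw.symm hwv).symm

theorem sparsityGraph_PMat_le [Fintype V] [DecidableEq V] (A : Matrix V V ℝ)
    (steps : List (ℝ × ℝ × ℝ × Set (V × V))) (hsym : ∀ x ∈ steps, SymmPairs x.2.2.2) :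
    sparsityGraph (PMat steps A) ≤ PGraph (steps.map fun x => x.2.2.2) (sparsityGraph A) := by
  induction steps with
  | nil => exact le_rfl
  | cons x rest ih =>
    obtain ⟨a, b, c, T⟩ := x
    exact sparsityGraph_quadPoly_le a b c <| sparsityGraph_threshMat_le
      (hsym _ List.mem_cons_self) (ih fun y hy => hsym y (List.mem_cons_of_mem _ hy))

end SparsityGraph

theorem stmt7_general {n : ℕ} (A : Matrix (Fin n) (Fin n) ℝ)
    (steps : List (ℝ × ℝ × ℝ × Set (Fin n × Fin n)))
    (hsym : ∀ x ∈ steps, SymmPairs x.2.2.2) :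
    ∀ v w : Fin n, v ≠ w → PMat steps A v w ≠ 0 →
      (PGraph (steps.map fun x => x.2.2.2) (sparsityGraph A)).Adj v w :=
  fun _ _ hvw h => sparsityGraph_PMat_le A steps hsym ⟨hvw, Or.inl h⟩

/-- the sparsity graph of `P(A)` is a subgraph of `𝒫(G(A))`. -/
theorem stmt7 {n : ℕ} (A : Matrix (Fin n) (Fin n) ℝ) (hA : A.IsSymm)
    (steps : List (ℝ × ℝ × ℝ × Set (Fin n × Fin n)))
    (hsym : ∀ x ∈ steps, SymmPairs x.2.2.2) :
    ∀ v w : Fin n, v ≠ w → PMat steps A v w ≠ 0 →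
      (PGraph (steps.map fun x => x.2.2.2) (sparsityGraph A)).Adj v w :=
  stmt7_general A steps hsym
end
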